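/- Let A consist of three pairwise non-collinear covectors α, β, γ on ℂ² with nonzero multiplicities c_α, c_β, c_γ, and suppose the form G = Σ c_δ δ⊗δ is non-degenerate. Then A is a trigonometric ∨-system (i.e., all series conditions Σ_{δ∈Γ} c_δ (α',δ) α'∧δ = 0 hold) if and only if α ± β ± γ = 0 for some choice of signs. -/

import Mathlib

open scoped BigOperators

noncomputable section

abbrev V (n : ℕ) := Fin n → ℂ
abbrev D (n : ℕ) := Module.Dual ℂ (V n)

/-- Wedge of two covectors: `(α∧β)(a,b) = α(a)β(b) − α(b)β(a)`. -/
def wedge {n : ℕ} (α β : D n) (a b : V n) : ℂ := α a * β b - α b * β a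

/-- `β` is parallel (collinear) to `α`. -/
def Parallel {n : ℕ} (α β : D n) : Prop := ∃ t : ℂ, β = t • α

/-- Two covectors belong to a common `α`-series: their difference or sum is an
integer multiple of `α`. -/
def SameSer {n : ℕ} (α γ₁ γ₂ : D n) : Prop :=
  ∃ m : ℤ, γ₁ - γ₂ = (m : ℂ) • α ∨ γ₁ + γ₂ = (m : ℂ) • α

/-- `Γ` is a (maximal) `α`-series of the system `A`. -/
def IsSeries {n : ℕ} (A : Finset (D n)) (α : D n) (Γ : Finset (D n)) : Prop :=
  Γ ⊆ A ∧ (∀ β ∈ Γ, ¬ Parallel α β) ∧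
    (∀ γ₁ ∈ Γ, ∀ γ₂ ∈ Γ, SameSer α γ₁ γ₂) ∧
    (∀ β ∈ A, ¬ Parallel α β → (∃ γ ∈ Γ, SameSer α β γ) → β ∈ Γ)

/-- The trigonometric ∨-system series conditions:
for every `α ∈ A` and every `α`-series `Γ`, `Σ_{β∈Γ} c_β (α,β) α∧β = 0`. -/
def SeriesCond {n : ℕ} (A : Finset (D n)) (c : D n → ℂ) (ip : D n → D n → ℂ) : Prop :=
  ∀ α ∈ A, ∀ Γ : Finset (D n), IsSeries A α Γ →
    ∀ a b : V n, ∑ β ∈ Γ, c β * ip α β * wedge α β a b = 0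

/-- The bilinear form `G(u,v) = Σ_{α∈A} c_α α(u) α(v)`. -/
def Gform {n : ℕ} (A : Finset (D n)) (c : D n → ℂ) (u v : V n) : ℂ :=
  ∑ α ∈ A, c α * α u * α v

/-- Non-degeneracy of a bilinear form on `ℂⁿ`. -/
def NonDeg {n : ℕ} (B : V n → V n → ℂ) : Prop :=
  ∀ u : V n, (∀ v : V n, B u v = 0) → u = 0

/-- All covectors of `A` lie in an `n`-dimensional lattice. -/
def InLattice {n : ℕ} (A : Finset (D n)) : Prop :=
  ∃ f : Fin n → D n, LinearIndependent ℂ f ∧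
    ∀ β ∈ A, ∃ m : Fin n → ℤ, β = ∑ i, (m i : ℂ) • f i

/-- The `i`-th coordinate covector. -/
def coD {n : ℕ} (i : Fin n) : D n := LinearMap.proj i

/-- Partial derivative in the `i`-th coordinate direction. -/
def pd {n : ℕ} (i : Fin n) (f : V n → ℂ) (x : V n) : ℂ := fderiv ℂ f x (Pi.single i 1)

/-- Irreducibility: `A` does not split as a direct sum of two lower-dimensional systems. -/
def Irred {n : ℕ} (A : Finset (D n)) : Prop :=
  ¬ ∃ U₁ U₂ : Submodule ℂ (D n), U₁ ⊓ U₂ = ⊥ ∧ (∀ β ∈ A, β ∈ U₁ ∨ β ∈ U₂) ∧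
    (∃ β ∈ A, β ∉ U₁) ∧ (∃ β ∈ A, β ∉ U₂)

/-!
Write `(ξ, η) = ξ (η∨)`; the defining property of `∨` expands every covector as
`ξ = ∑ δ, c δ (δ, ξ) δ`, and makes `(·, ·)` symmetric.

If `β` and `γ` were in different `α`-series, then `{β}` and `{γ}` would be `α`-series, and the
series conditions would force `(α, β) = (α, γ) = 0`. As `β, γ` span the dual of `ℂ²`, this gives
`α∨ = 0`, hence `α = 0`. So `β ± γ = m α`, and likewise `α ± γ = m' β`; eliminating `β` and using
the independence of `α, γ` gives `m m' = 1`, so `m = ±1`.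

Conversely, if `α + ε₁ β + ε₂ γ = 0`, every `α`-series is empty or `{β, γ}`, and
`α ∧ γ = -ε₁ ε₂ α ∧ β`. The series sum is then a multiple of
`c β (α, β) - ε₁ ε₂ c γ (α, γ)`, which is the `β`-coefficient of `α - ∑ δ, c δ (δ, α) δ` once `γ`
is eliminated; it vanishes by the independence of `α, β`.
-/

theorem Module.Dual.eq_zero_of_linearIndependent_of_card_eq_finrank {K V ι : Type*} [Field K]
    [AddCommGroup V] [Module K V] [FiniteDimensional K V] [Fintype ι]
    {f : ι → Module.Dual K V} (hf : LinearIndependent K f)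
    (hcard : Fintype.card ι = Module.finrank K V) {v : V} (hv : ∀ i, f i v = 0) : v = 0 := by
  have hspan : Submodule.span K (Set.range f) ≤ LinearMap.ker (Module.Dual.eval K V v) :=
    Submodule.span_le.2 (Set.range_subset_iff.2 hv)
  rw [hf.span_eq_top_of_card_eq_finrank' (hcard.trans Subspace.dual_finrank_eq.symm)] at hspan
  exact (Module.forall_dual_apply_eq_zero_iff K v).1 fun φ => hspan Submodule.mem_top

lemma LinearIndependent.pair_ne {R M : Type*} [Ring R] [Nontrivial R] [AddCommGroup M]
    [Module R M] {x y : M} (h : LinearIndependent R ![x, y]) : x ≠ y :=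
  h.injective.ne zero_ne_one

section Covectors

variable {n : ℕ}

lemma Parallel.refl (x : D n) : Parallel x x := ⟨1, (one_smul ℂ x).symm⟩

lemma not_parallel_of_linearIndependent {x y : D n} (h : LinearIndependent ℂ ![x, y]) :
    ¬ Parallel x y := by
  rintro ⟨t, rfl⟩
  simpa using LinearIndependent.pair_iff.1 h t (-1) (by module)

lemma SameSer.refl (x y : D n) : SameSer x y y := ⟨0, Or.inl (by simp)⟩

lemma SameSer.symm {x y z : D n} (h : SameSer x y z) : SameSer x z y := by
  obtain ⟨m, h | h⟩ := h
  · exact ⟨-m, Or.inl (by push_cast; rw [neg_smul, ← h, neg_sub])⟩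
  · exact ⟨m, Or.inr (by rw [← h, add_comm])⟩

lemma SameSer.exists_add_smul_eq {x y z : D n} (h : SameSer x y z) :
    ∃ (m : ℤ) (e : ℂ), (e = 1 ∨ e = -1) ∧ y + e • z = (m : ℂ) • x := by
  obtain ⟨m, h | h⟩ := h
  · exact ⟨m, -1, Or.inr rfl, by rw [← h, neg_one_smul, sub_eq_add_neg]⟩
  · exact ⟨m, 1, Or.inl rfl, by rw [← h, one_smul]⟩

lemma sameSer_of_add_smul_add_smul_eq_zero {x y z : D n} {e f : ℂ} (he : e = 1 ∨ e = -1)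
    (hf : f = 1 ∨ f = -1) (h : x + e • y + f • z = 0) : SameSer x y z := by
  rcases he with rfl | rfl <;> rcases hf with rfl | rfl
  · exact ⟨-1, Or.inr (by linear_combination (norm := module) h)⟩
  · exact ⟨-1, Or.inl (by linear_combination (norm := module) h)⟩
  · exact ⟨1, Or.inl (by linear_combination (norm := module) -h)⟩
  · exact ⟨1, Or.inr (by linear_combination (norm := module) -h)⟩

lemma exists_add_smul_add_smul_eq_zero_of_sameSer {x y z : D n}
    (hxz : LinearIndependent ℂ ![x, z]) (h₁ : SameSer x y z) (h₂ : SameSer y x z) :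
    ∃ ε₁ ε₂ : ℂ, (ε₁ = 1 ∨ ε₁ = -1) ∧ (ε₂ = 1 ∨ ε₂ = -1) ∧ x + ε₁ • y + ε₂ • z = 0 := by
  obtain ⟨m, e, he, hm⟩ := h₁.exists_add_smul_eq
  obtain ⟨m', e', -, hm'⟩ := h₂.exists_add_smul_eq
  have hxz_rel : (1 - (m' : ℂ) * m) • x + (e' + m' * e) • z = 0 := by
    linear_combination (norm := module) (m' : ℂ) • hm + hm'
  have hmm : m' * m = 1 := by
    exact_mod_cast (sub_eq_zero.1 (LinearIndependent.pair_iff.1 hxz _ _ hxz_rel).1).symm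
  have hm_sign : (m : ℂ) = 1 ∨ (m : ℂ) = -1 := by
    rcases Int.eq_one_or_neg_one_of_mul_eq_one (mul_comm m' m ▸ hmm) with h | h <;> simp [h]
  refine ⟨-m, -m * e, ?_, ?_, ?_⟩
  · rcases hm_sign with h | h <;> simp [h]
  · rcases hm_sign with h | h <;> rcases he with rfl | rfl <;> simp [h]
  · linear_combination (norm := module) -(m : ℂ) • hm - (mul_self_eq_one_iff.2 hm_sign) • x

lemma exists_wedge_ne_zero {x y : D n} (h : LinearIndependent ℂ ![x, y]) :
    ∃ a b, wedge x y a b ≠ 0 := by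
  by_contra! hw
  obtain ⟨a, ha⟩ : ∃ a, x a ≠ 0 := by
    by_contra! hx
    exact LinearIndependent.ne_zero 0 h (LinearMap.ext hx)
  refine not_parallel_of_linearIndependent h ⟨y a / x a, LinearMap.ext fun b => ?_⟩
  have hab := hw a b
  rw [wedge] at hab
  rw [LinearMap.smul_apply, smul_eq_mul]
  field_simp
  linear_combination hab

end Covectors

section Vee

variable {n : ℕ} {A : Finset (D n)} {c : D n → ℂ} {vee : D n → V n}

lemma apply_vee_comm (hvee : ∀ ξ v, Gform A c (vee ξ) v = ξ v) (ξ η : D n) :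
    ξ (vee η) = η (vee ξ) := by
  rw [← hvee ξ (vee η), ← hvee η (vee ξ), Gform, Gform]
  exact Finset.sum_congr rfl fun δ _ => by ring

lemma eq_sum_smul_of_vee (hvee : ∀ ξ v, Gform A c (vee ξ) v = ξ v) (ξ : D n) :
    ξ = ∑ δ ∈ A, (c δ * δ (vee ξ)) • δ :=
  LinearMap.ext fun v => by simp [← hvee ξ v, Gform, mul_assoc]

lemma eq_zero_of_vee_eq_zero (hvee : ∀ ξ v, Gform A c (vee ξ) v = ξ v) {ξ : D n}
    (h : vee ξ = 0) : ξ = 0 :=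
  LinearMap.ext fun v => by simp [← hvee ξ v, h, Gform]

lemma apply_vee_eq_zero_of_isSeries_singleton (hsc : SeriesCond A c fun ξ η => ξ (vee η))
    {x y : D n} (hx : x ∈ A) (hxy : LinearIndependent ℂ ![x, y]) (hcy : c y ≠ 0)
    (hΓ : IsSeries A x {y}) : x (vee y) = 0 := by
  obtain ⟨a, b, hab⟩ := exists_wedge_ne_zero hxy
  simpa [hcy, hab] using hsc x hx {y} hΓ a b

end Vee

section Series

variable {n : ℕ} [DecidableEq (D n)] {A : Finset (D n)} {x y z : D n}

lemma isSeries_singleton (hA : A = {x, y, z}) (hy : ¬ Parallel x y) (hzy : ¬ SameSer x z y) :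
    IsSeries A x {y} := by
  subst hA
  refine ⟨by simp, by simpa using hy, by simp [SameSer.refl], ?_⟩
  rintro δ hδ hδx ⟨_, hw, hδw⟩
  rw [Finset.mem_singleton] at hw ⊢
  subst hw
  simp only [Finset.mem_insert, Finset.mem_singleton] at hδ
  rcases hδ with rfl | rfl | rfl
  · exact absurd (Parallel.refl _) hδx
  · rfl
  · exact absurd hδw hzy

lemma IsSeries.eq_empty_or_eq_pair {Γ : Finset (D n)} (hΓ : IsSeries A x Γ)
    (hA : A = {x, y, z}) (hy : ¬ Parallel x y) (hz : ¬ Parallel x z) (hyz : SameSer x y z) :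
    Γ = ∅ ∨ Γ = {y, z} := by
  obtain ⟨hsub, hpar, -, hmax⟩ := hΓ
  subst hA
  have hsub_pair : Γ ⊆ {y, z} := fun δ hδ => by
    rcases Finset.mem_insert.1 (hsub hδ) with rfl | h
    · exact absurd (Parallel.refl _) (hpar _ hδ)
    · exact h
  have hy_iff_hz : y ∈ Γ ↔ z ∈ Γ :=
    ⟨fun h => hmax z (by simp) hz ⟨y, h, hyz.symm⟩, fun h => hmax y (by simp) hy ⟨z, h, hyz⟩⟩
  by_cases hyΓ : y ∈ Γ
  · exact Or.inr (hsub_pair.antisymm (Finset.insert_subset hyΓ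
      (Finset.singleton_subset_iff.2 (hy_iff_hz.1 hyΓ))))
  · refine Or.inl (Finset.eq_empty_of_forall_notMem fun δ hδ => ?_)
    rcases Finset.mem_insert.1 (hsub_pair hδ) with rfl | h
    · exact hyΓ hδ
    · exact hy_iff_hz.not.1 hyΓ (Finset.mem_singleton.1 h ▸ hδ)

variable {c : D n → ℂ} {vee : D n → V n}

lemma IsSeries.sum_eq_zero_of_add_smul_add_smul_eq_zero (hA : A = {x, y, z})
    (hvee : ∀ ξ v, Gform A c (vee ξ) v = ξ v) (hxy : LinearIndependent ℂ ![x, y])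
    (hxz : LinearIndependent ℂ ![x, z]) (hyz : y ≠ z) {e f : ℂ} (he : e = 1 ∨ e = -1)
    (hf : f = 1 ∨ f = -1) (hrel : x + e • y + f • z = 0) {Γ : Finset (D n)}
    (hΓ : IsSeries A x Γ) (a b : V n) :
    ∑ δ ∈ Γ, c δ * x (vee δ) * wedge x δ a b = 0 := by
  have hz : z = -f • x - (f * e) • y := by
    linear_combination (norm := module) f • hrel - (mul_self_eq_one_iff.2 hf) • z
  rcases hΓ.eq_empty_or_eq_pair hA (not_parallel_of_linearIndependent hxy)
    (not_parallel_of_linearIndependent hxz) (sameSer_of_add_smul_add_smul_eq_zero he hf hrel)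
    with rfl | rfl
  · exact Finset.sum_empty
  have hexp := eq_sum_smul_of_vee hvee x
  rw [hA, Finset.sum_insert (by simp [hxy.pair_ne, hxz.pair_ne]),
    Finset.sum_pair hyz] at hexp
  have hcoef : c y * y (vee x) = f * e * (c z * z (vee x)) := by
    have h0 : (1 - c x * x (vee x) + f * (c z * z (vee x))) • x +
        (f * e * (c z * z (vee x)) - c y * y (vee x)) • y = 0 := by
      linear_combination (norm := module) hexp + (c z * z (vee x)) • hz
    exact (sub_eq_zero.1 (LinearIndependent.pair_iff.1 hxy _ _ h0).2).symm
  have hz_apply : ∀ v, z v = -f * x v - f * e * y v := fun v => by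
    simp [hz, mul_assoc]
  rw [Finset.sum_pair hyz, apply_vee_comm hvee x y, apply_vee_comm hvee x z, wedge, wedge,
    hz_apply a, hz_apply b]
  linear_combination (x a * y b - x b * y a) * hcoef

end Series

lemma sameSer_of_seriesCond [DecidableEq (D 2)] {x y z : D 2} {A : Finset (D 2)}
    {c : D 2 → ℂ} {vee : D 2 → V 2}
    (hA : A = {x, y, z}) (hvee : ∀ ξ v, Gform A c (vee ξ) v = ξ v)
    (hsc : SeriesCond A c fun ξ η => ξ (vee η)) (hxy : LinearIndependent ℂ ![x, y])
    (hxz : LinearIndependent ℂ ![x, z]) (hyz : LinearIndependent ℂ ![y, z])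
    (hcy : c y ≠ 0) (hcz : c z ≠ 0) : SameSer x y z := by
  by_contra hns
  have hx : x ∈ A := by simp [hA]
  have hyx : y (vee x) = 0 := (apply_vee_comm hvee y x).trans <|
    apply_vee_eq_zero_of_isSeries_singleton hsc hx hxy hcy <|
      isSeries_singleton hA (not_parallel_of_linearIndependent hxy) (mt SameSer.symm hns)
  have hzx : z (vee x) = 0 := (apply_vee_comm hvee z x).trans <|
    apply_vee_eq_zero_of_isSeries_singleton hsc hx hxz hcz <|
      isSeries_singleton (hA.trans (by rw [Finset.pair_comm]))
        (not_parallel_of_linearIndependent hxz) hns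
  have hvx : vee x = 0 := Module.Dual.eq_zero_of_linearIndependent_of_card_eq_finrank hyz
    (by simp) (Fin.forall_fin_two.2 ⟨hyx, hzx⟩)
  exact hxy.ne_zero 0 (eq_zero_of_vee_eq_zero hvee hvx)

lemma exists_add_smul_add_smul_eq_zero_of_seriesCond [DecidableEq (D 2)] {x y z : D 2}
    {A : Finset (D 2)} {c : D 2 → ℂ} {vee : D 2 → V 2}
    (hA : A = {x, y, z}) (hvee : ∀ ξ v, Gform A c (vee ξ) v = ξ v)
    (hsc : SeriesCond A c fun ξ η => ξ (vee η)) (hxy : LinearIndependent ℂ ![x, y])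
    (hxz : LinearIndependent ℂ ![x, z]) (hyz : LinearIndependent ℂ ![y, z])
    (hcx : c x ≠ 0) (hcy : c y ≠ 0) (hcz : c z ≠ 0) :
    ∃ ε₁ ε₂ : ℂ, (ε₁ = 1 ∨ ε₁ = -1) ∧ (ε₂ = 1 ∨ ε₂ = -1) ∧ x + ε₁ • y + ε₂ • z = 0 :=
  exists_add_smul_add_smul_eq_zero_of_sameSer hxz
    (sameSer_of_seriesCond hA hvee hsc hxy hxz hyz hcy hcz)
    (sameSer_of_seriesCond (hA.trans (Finset.insert_comm _ _ _)) hvee hsc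
      (LinearIndependent.pair_symm_iff.1 hxy) hyz hxz hcx hcz)

lemma seriesCond_of_add_smul_add_smul_eq_zero {n : ℕ} [DecidableEq (D n)] {x y z : D n}
    {A : Finset (D n)} {c : D n → ℂ} {vee : D n → V n}
    (hA : A = {x, y, z}) (hvee : ∀ ξ v, Gform A c (vee ξ) v = ξ v)
    (hxy : LinearIndependent ℂ ![x, y]) (hxz : LinearIndependent ℂ ![x, z])
    (hyz : LinearIndependent ℂ ![y, z]) {ε₁ ε₂ : ℂ} (hε₁ : ε₁ = 1 ∨ ε₁ = -1)
    (hε₂ : ε₂ = 1 ∨ ε₂ = -1) (hrel : x + ε₁ • y + ε₂ • z = 0) :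
    SeriesCond A c fun ξ η => ξ (vee η) := by
  have hε₁₂ : ε₁ * ε₂ = 1 ∨ ε₁ * ε₂ = -1 := by
    rcases hε₁ with rfl | rfl <;> rcases hε₂ with rfl | rfl <;> norm_num
  intro ξ hξ Γ hΓ a b
  rw [hA, Finset.mem_insert, Finset.mem_insert, Finset.mem_singleton] at hξ
  rcases hξ with rfl | rfl | rfl
  · exact hΓ.sum_eq_zero_of_add_smul_add_smul_eq_zero hA hvee hxy hxz
      hyz.pair_ne hε₁ hε₂ hrel a b
  · exact hΓ.sum_eq_zero_of_add_smul_add_smul_eq_zero (hA.trans (Finset.insert_comm _ _ _)) hvee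
      (LinearIndependent.pair_symm_iff.1 hxy) hyz hxz.pair_ne hε₁ hε₁₂
      (by linear_combination (norm := module) ε₁ • hrel - (mul_self_eq_one_iff.2 hε₁) • ξ) a b
  · exact hΓ.sum_eq_zero_of_add_smul_add_smul_eq_zero
      (hA.trans (by rw [Finset.pair_comm, Finset.insert_comm])) hvee
      (LinearIndependent.pair_symm_iff.1 hxz) (LinearIndependent.pair_symm_iff.1 hyz)
      hxy.pair_ne hε₂ hε₁₂
      (by linear_combination (norm := module) ε₂ • hrel - (mul_self_eq_one_iff.2 hε₂) • ξ) a b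

theorem three_covectors_general (α β γ : D 2)
    (h1 : LinearIndependent ℂ ![α, β]) (h2 : LinearIndependent ℂ ![α, γ])
    (h3 : LinearIndependent ℂ ![β, γ])
    (cα cβ cγ : ℂ) (hcα : cα ≠ 0) (hcβ : cβ ≠ 0) (hcγ : cγ ≠ 0)
    (A : Finset (D 2)) (hA : ∀ ξ, ξ ∈ A ↔ ξ = α ∨ ξ = β ∨ ξ = γ)
    (c : D 2 → ℂ) (hc1 : c α = cα) (hc2 : c β = cβ) (hc3 : c γ = cγ)
    (vee : D 2 → V 2) (hvee : ∀ ξ : D 2, ∀ v : V 2, Gform A c (vee ξ) v = ξ v) :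
    SeriesCond A c (fun ξ η => ξ (vee η)) ↔
      ∃ ε₁ ε₂ : ℂ, (ε₁ = 1 ∨ ε₁ = -1) ∧ (ε₂ = 1 ∨ ε₂ = -1) ∧
        α + ε₁ • β + ε₂ • γ = 0 := by
  classical
  subst hc1 hc2 hc3
  have hαβγ : A = {α, β, γ} := Finset.ext fun ξ => by simp [hA]
  exact ⟨fun hsc => exists_add_smul_add_smul_eq_zero_of_seriesCond hαβγ hvee hsc h1 h2 h3
      hcα hcβ hcγ,
    fun ⟨_, _, hε₁, hε₂, hrel⟩ => seriesCond_of_add_smul_add_smul_eq_zero hαβγ hvee h1 h2 h3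
      hε₁ hε₂ hrel⟩

/-- Proposition 2, first part: three pairwise non-collinear covectors
form a trigonometric ∨-system iff `α ± β ± γ = 0` for some choice of signs. -/
theorem three_covectors (α β γ : D 2)
    (h1 : LinearIndependent ℂ ![α, β]) (h2 : LinearIndependent ℂ ![α, γ])
    (h3 : LinearIndependent ℂ ![β, γ])
    (cα cβ cγ : ℂ) (hcα : cα ≠ 0) (hcβ : cβ ≠ 0) (hcγ : cγ ≠ 0)
    (A : Finset (D 2)) (hA : ∀ ξ, ξ ∈ A ↔ ξ = α ∨ ξ = β ∨ ξ = γ)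
    (c : D 2 → ℂ) (hc1 : c α = cα) (hc2 : c β = cβ) (hc3 : c γ = cγ)
    (hnd : NonDeg (Gform A c))
    (vee : D 2 → V 2) (hvee : ∀ ξ : D 2, ∀ v : V 2, Gform A c (vee ξ) v = ξ v) :
    SeriesCond A c (fun ξ η => ξ (vee η)) ↔
      ∃ ε₁ ε₂ : ℂ, (ε₁ = 1 ∨ ε₁ = -1) ∧ (ε₂ = 1 ∨ ε₂ = -1) ∧
        α + ε₁ • β + ε₂ • γ = 0 :=
  three_covectors_general α β γ h1 h2 h3 cα cβ cγ hcα hcβ hcγ A hA c hc1 hc2 hc3 vee hvee
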